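/- arXiv:1705.02923 — 2 statements merged into one kernel-verified Lean document; each statement's English description precedes it below -/
import Mathlib

section
/- Let c : ℤ → Bool be a coloring such that there exists N with c(i) = false for all i ≤ -N and c(i) = true for all i ≥ N. Then for every positive integer k, the number of integers ℓ such that c(ℓ) ≠ c(ℓ+k) is finite and congruent to k modulo 2. -/
/-- **Parity of color changes at step `k`.**  If `c : ℤ → Bool` is eventually `false`
in the negative direction and eventually `true` in the positive direction, then for every
positive integer `k` the set of integers `ℓ` with `c ℓ ≠ c (ℓ + k)` is finite and its
cardinality is congruent to `k` modulo 2. -/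
theorem color_change_parity (c : ℤ → Bool) (N : ℤ)
    (hneg : ∀ i : ℤ, i ≤ -N → c i = false)
    (hpos : ∀ i : ℤ, N ≤ i → c i = true)
    (k : ℕ) (hk : 0 < k) :
    {ℓ : ℤ | c ℓ ≠ c (ℓ + k)}.Finite ∧
      ({ℓ : ℤ | c ℓ ≠ c (ℓ + k)}.ncard : ℤ) ≡ (k : ℤ) [ZMOD 2] := by
  rcases le_or_gt N 0 with hN | hN
  · exact absurd (hpos N le_rfl) (by simp [hneg N (by omega)])
  set a : ℤ := -N - k with ha
  have hk' : (1 : ℤ) ≤ k := by exact_mod_cast hk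
  have hab : a ≤ N := by omega
  set T : Finset ℤ := (Finset.Ico a N).filter (fun ℓ => c ℓ ≠ c (ℓ + k)) with hT
  have hset : {ℓ : ℤ | c ℓ ≠ c (ℓ + k)} = ↑T := by
    ext ℓ
    simp only [hT, Set.mem_setOf_eq, Finset.coe_filter, Finset.mem_Ico]
    constructor
    · intro h
      refine ⟨⟨?_, ?_⟩, h⟩
      · by_contra hlt
        push_neg at hlt
        rw [hneg ℓ (by omega), hneg (ℓ + k) (by omega)] at h
        exact h rfl
      · by_contra hlt
        push_neg at hlt
        rw [hpos ℓ (by omega), hpos (ℓ + k) (by omega)] at h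
        exact h rfl
    · exact fun h => h.2
  have hfin : {ℓ : ℤ | c ℓ ≠ c (ℓ + k)}.Finite := by
    rw [hset]; exact T.finite_toSet
  refine ⟨hfin, ?_⟩
  have hcard : {ℓ : ℤ | c ℓ ≠ c (ℓ + k)}.ncard = T.card := by
    rw [hset, Set.ncard_coe_finset]
  rw [hcard]
  rw [Int.ModEq]
  have key : ((T.card : ℤ) : ZMod 2) = ((k : ℤ) : ZMod 2) := by
    set g : ℤ → ZMod 2 := fun ℓ => if c ℓ then 1 else 0 with hg
    have hTcard : (T.card : ZMod 2)
        = ∑ ℓ ∈ Finset.Ico a N, (g ℓ + g (ℓ + k)) := by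
      rw [hT, Finset.card_filter]
      push_cast
      refine Finset.sum_congr rfl fun ℓ _ => ?_
      simp only [hg]
      cases hc1 : c ℓ <;> cases hc2 : c (ℓ + k) <;> simp [hc1, hc2] <;> decide
    have hshift : ∑ ℓ ∈ Finset.Ico a N, g (ℓ + k)
        = ∑ ℓ ∈ Finset.Ico (a + k) (N + k), g ℓ := by
      rw [← Finset.map_add_right_Ico, Finset.sum_map]
      rfl
    have h1 : (∑ ℓ ∈ Finset.Ico a N, g ℓ) + ∑ ℓ ∈ Finset.Ico N (N + k), g ℓ
        = ∑ ℓ ∈ Finset.Ico a (N + k), g ℓ :=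
      by rw [← Finset.Ico_union_Ico_eq_Ico hab (show N ≤ N + (k:ℤ) by omega),
             Finset.sum_union (Finset.Ico_disjoint_Ico_consecutive a N (N + k))]
    have h2 : (∑ ℓ ∈ Finset.Ico a (a + k), g ℓ) + ∑ ℓ ∈ Finset.Ico (a + k) (N + k), g ℓ
        = ∑ ℓ ∈ Finset.Ico a (N + k), g ℓ :=
      by rw [← Finset.Ico_union_Ico_eq_Ico (show a ≤ a + (k:ℤ) by omega)
               (show a + (k:ℤ) ≤ N + k by omega),
             Finset.sum_union (Finset.Ico_disjoint_Ico_consecutive a (a + k) (N + k))]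
    have hlow : ∑ ℓ ∈ Finset.Ico a (a + k), g ℓ = 0 := by
      refine Finset.sum_eq_zero fun ℓ hℓ => ?_
      rw [Finset.mem_Ico] at hℓ
      simp [hg, hneg ℓ (by omega)]
    have hhigh : ∑ ℓ ∈ Finset.Ico N (N + k), g ℓ = (k : ZMod 2) := by
      have hone : ∀ ℓ ∈ Finset.Ico N (N + (k : ℤ)), g ℓ = 1 := fun ℓ hℓ => by
        rw [Finset.mem_Ico] at hℓ
        simp [hg, hpos ℓ hℓ.1]
      rw [Finset.sum_congr rfl hone, Finset.sum_const, Int.card_Ico]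
      simp
    rw [hlow, zero_add] at h2
    push_cast
    rw [hTcard, Finset.sum_add_distrib, hshift, h2, ← h1, hhigh, ← add_assoc,
      CharTwo.add_self_eq_zero, zero_add]
  have := (ZMod.intCast_eq_intCast_iff _ _ 2).mp key
  simpa [Int.ModEq] using this
end

section
/- Let G be a group acting on a set M̂, let B̂ ⊆ M̂, and for the action of ℤ on M̂ define N₊ = ⋃_{i ≥ 0} (B̂ + i) and N = ⋃_{i ∈ ℤ} (B̂ + i). Suppose p̂ ∈ M̂ is such that p̂ + i ∈ N₊ for all sufficiently large i and p̂ + i ∉ N₊ for all sufficiently negative i. Then for every k ≥ 1, the number of integers ℓ such that exactly one of p̂ + ℓ, p̂ + ℓ + k lies in N₊ is finite and congruent to k modulo 2. -/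
/-!
Moving along the orbit by `+1` maps `N₊ = ⋃_{i ≥ 0} (B̂ + i)` into itself, so the colouring
`ℓ ↦ (p̂ + ℓ ∈ N₊)` is monotone; being black far down and white far up, it is the indicator of
a half-line `[t, ∞)`. The integers `ℓ` at which `ℓ` and `ℓ + k` get different colours then
form an interval of length `|k|`, and `|k| ≡ k (mod 2)`.
-/

theorem monotone_vadd_mem_iUnion_nonneg_vadd {M : Type*} [AddAction ℤ M] (B : Set M) (p : M) :
    Monotone fun ℓ : ℤ => ℓ +ᵥ p ∈ ⋃ i ∈ {i : ℤ | 0 ≤ i}, (fun x => i +ᵥ x) '' B := by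
  intro ℓ m hℓm hℓ
  simp only [Set.mem_iUnion, Set.mem_image, Set.mem_ofPred_eq] at hℓ ⊢
  obtain ⟨i, hi, b, hb, hib⟩ := hℓ
  refine ⟨m - ℓ + i, by omega, b, hb, ?_⟩
  rw [add_vadd, hib, vadd_vadd, sub_add_cancel]

theorem Int.exists_forall_iff_le_of_monotone {P : ℤ → Prop} (hP : Monotone P)
    (hup : ∃ A, ∀ i, A ≤ i → P i) (hdown : ∃ B, ∀ i, i ≤ B → ¬P i) :
    ∃ t, ∀ ℓ, P ℓ ↔ t ≤ ℓ := by
  obtain ⟨A, hA⟩ := hup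
  obtain ⟨B, hB⟩ := hdown
  obtain ⟨t, ht, ht_least⟩ := Int.exists_least_of_bdd
    ⟨B + 1, fun z hz => by by_contra! h; exact hB z (by omega) hz⟩ ⟨A, hA A le_rfl⟩
  exact ⟨t, fun ℓ => ⟨ht_least ℓ, fun h => hP h ht⟩⟩

theorem Int.setOf_xor_le_le_add (t k : ℤ) :
    {ℓ : ℤ | Xor (t ≤ ℓ) (t ≤ ℓ + k)} = Set.Ico (min t (t - k)) (max t (t - k)) := by
  ext ℓ
  simp only [Set.mem_ofPred_eq, Set.mem_Ico, Xor]
  omega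

theorem Int.ncard_Ico (a b : ℤ) : (Set.Ico a b).ncard = (b - a).toNat := by
  rw [← Finset.coe_Ico, Set.ncard_coe_finset, Int.card_Ico]

theorem zaction_parity_general {Mhat : Type*} [AddAction ℤ Mhat] (Bhat : Set Mhat) (phat : Mhat)
    (Nplus : Set Mhat) (hN : Nplus = ⋃ i ∈ {i : ℤ | 0 ≤ i}, (fun x => i +ᵥ x) '' Bhat)
    (hup : ∃ A : ℤ, ∀ i : ℤ, A ≤ i → (i +ᵥ phat) ∈ Nplus)
    (hdown : ∃ B : ℤ, ∀ i : ℤ, i ≤ B → (i +ᵥ phat) ∉ Nplus)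
    (k : ℤ) :
    {ℓ : ℤ | Xor' ((ℓ +ᵥ phat) ∈ Nplus) (((ℓ + k) +ᵥ phat) ∈ Nplus)}.Finite ∧
      ({ℓ : ℤ | Xor' ((ℓ +ᵥ phat) ∈ Nplus) (((ℓ + k) +ᵥ phat) ∈ Nplus)}.ncard : ℤ)
        ≡ k [ZMOD 2] := by
  have hmono : Monotone fun ℓ : ℤ => ℓ +ᵥ phat ∈ Nplus :=
    hN ▸ monotone_vadd_mem_iUnion_nonneg_vadd Bhat phat
  obtain ⟨t, ht⟩ := Int.exists_forall_iff_le_of_monotone hmono hup hdown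
  simp only [Xor', ht, Int.setOf_xor_le_le_add]
  refine ⟨Set.finite_Ico _ _, ?_⟩
  rw [Int.ncard_Ico, Int.toNat_of_nonneg (by omega),
    show max t (t - k) - min t (t - k) = |k| by rw [abs_eq_max_neg]; omega]
  exact Int.abs_modEq_two

/-- **Intersection-parity for a ℤ-action (set-theoretic form).**  Let `ℤ` act on a set
`M̂`, let `B̂ ⊆ M̂`, and set `N₊ = ⋃_{i ≥ 0} (B̂ + i)`.  Suppose `p̂ ∈ M̂` is such that
`p̂ + i ∈ N₊` for all sufficiently large `i` and `p̂ + i ∉ N₊` for all sufficiently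
negative `i`.  Then for every `k ≥ 1`, the set of integers `ℓ` such that exactly one of
`p̂ + ℓ`, `p̂ + ℓ + k` lies in `N₊` is finite and its cardinality is congruent to `k`
modulo 2. -/
theorem zaction_parity {Mhat : Type*} [AddAction ℤ Mhat] (Bhat : Set Mhat) (phat : Mhat)
    (Nplus : Set Mhat) (hN : Nplus = ⋃ i ∈ {i : ℤ | 0 ≤ i}, (fun x => i +ᵥ x) '' Bhat)
    (hup : ∃ A : ℤ, ∀ i : ℤ, A ≤ i → (i +ᵥ phat) ∈ Nplus)
    (hdown : ∃ B : ℤ, ∀ i : ℤ, i ≤ B → (i +ᵥ phat) ∉ Nplus)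
    (k : ℤ) (hk : 1 ≤ k) :
    {ℓ : ℤ | Xor' ((ℓ +ᵥ phat) ∈ Nplus) (((ℓ + k) +ᵥ phat) ∈ Nplus)}.Finite ∧
      ({ℓ : ℤ | Xor' ((ℓ +ᵥ phat) ∈ Nplus) (((ℓ + k) +ᵥ phat) ∈ Nplus)}.ncard : ℤ)
        ≡ k [ZMOD 2] :=
  zaction_parity_general Bhat phat Nplus hN hup hdown k
end
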